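/- arXiv:2310.00478 — 4 statements merged into one kernel-verified Lean document; each statement's English description precedes it below -/
import Mathlib

section
/- If a group G is subgroup separable (LERF), then the direct product G × ℤ is subgroup separable. -/
/-!
Let `c = (1, 1)` generate the central factor `ℤ`. For `x ∉ H` there is `n ≠ 0` with
`x ∉ H ⊔ ⟨c ^ n⟩`: if some `c ^ m ≠ 1` lies in `H` take `n = m`; otherwise `H` meets `x⟨c⟩` in at
most one point `x c ^ (-j)`, with `j ≠ 0`, and `n = 2j` works. So we may assume `H ⊇ 1 × Z` with
`Z` of finite index. Then `B = pr₁ (H ∩ (G × Z))` is finitely generated by Schreier's lemma, and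
`H ∩ (G × 1) = B × 1`. Separate from `B` inside `G` the first coordinate of `x` corrected by an
element of `H`, by a finite-index subgroup with normal core `N`: the finite-index subgroup
`H ⊔ (N × 1)` still misses `x`.
-/

/-- A group `G` is subgroup separable (LERF) if every finitely generated subgroup
is the intersection of the finite-index subgroups containing it. -/
def IsLERF (G : Type*) [Group G] : Prop :=
  ∀ H : Subgroup G, H.FG → H = sInf {K : Subgroup G | H ≤ K ∧ K.FiniteIndex}

namespace Subgroup

variable {G : Type*} [Group G]

theorem FG.map {G' : Type*} [Group G'] {H : Subgroup G} (hH : H.FG) (f : G →* G') :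
    (H.map f).FG := by
  classical
  obtain ⟨S, rfl⟩ := hH
  exact ⟨S.image f, by rw [Finset.coe_image, MonoidHom.map_closure]⟩

theorem FG.inf_of_finiteIndex {H : Subgroup G} (hH : H.FG) (K : Subgroup G) [K.FiniteIndex] :
    (H ⊓ K).FG := by
  have : Group.FG H := (Group.fg_iff_subgroup_fg H).mpr hH
  rw [inf_comm, ← subgroupOf_map_subtype]
  exact ((Group.fg_iff_subgroup_fg _).mp inferInstance).map H.subtype

instance finiteIndex_prod {G' : Type*} [Group G'] (H : Subgroup G) (K : Subgroup G')
    [H.FiniteIndex] [K.FiniteIndex] : (H.prod K).FiniteIndex :=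
  ⟨by rw [index_prod]; exact mul_ne_zero FiniteIndex.index_ne_zero FiniteIndex.index_ne_zero⟩

theorem mem_sup_zpowers_of_mem_center {H : Subgroup G} {c x : G} (hc : c ∈ center G) :
    x ∈ H ⊔ zpowers c ↔ ∃ h ∈ H, ∃ k : ℤ, h * c ^ k = x := by
  have : (zpowers c).Normal := ⟨fun n hn g => by
    rwa [mem_center_iff.mp (zpowers_le.mpr hc hn) g, mul_inv_cancel_right]⟩
  simp only [mem_sup_of_normal_right, mem_zpowers_iff, exists_exists_eq_and]

theorem exists_ne_zero_notMem_sup_zpowers_zpow {H : Subgroup G} {c x : G} (hc : c ∈ center G)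
    (hx : x ∉ H) : ∃ n : ℤ, n ≠ 0 ∧ x ∉ H ⊔ zpowers (c ^ n) := by
  by_contra! hsup
  have hsup' (n : ℤ) (hn : n ≠ 0) : ∃ h ∈ H, ∃ k : ℤ, h * (c ^ n) ^ k = x :=
    (mem_sup_zpowers_of_mem_center (zpow_mem hc n)).mp (hsup n hn)
  by_cases hcH : ∃ n : ℤ, n ≠ 0 ∧ c ^ n ∈ H
  · obtain ⟨n, hn, hcn⟩ := hcH
    obtain ⟨h, hh, k, rfl⟩ := hsup' n hn
    exact hx (H.mul_mem hh (H.zpow_mem hcn k))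
  push Not at hcH
  obtain ⟨h, hh, j, rfl⟩ := hsup' 1 one_ne_zero
  have hj : j ≠ 0 := by
    rintro rfl
    simp only [zpow_zero, mul_one] at hx
    exact hx hh
  obtain ⟨h', hh', k, hk⟩ := hsup' (2 * j) (by omega)
  -- `h⁻¹ h'` is a power of `c` with odd, hence nonzero, multiplier `1 - 2k`
  refine hcH (j * (1 - 2 * k)) (mul_ne_zero hj (by omega)) ?_
  have : c ^ (j * (1 - 2 * k)) = h⁻¹ * h' := by
    rw [eq_inv_mul_iff_mul_eq, ← mul_inv_eq_iff_eq_mul.mpr hk.symm]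
    group
  exact this ▸ H.mul_mem (H.inv_mem hh) hh'

end Subgroup

theorem isLERF_iff {G : Type*} [Group G] : IsLERF G ↔
    ∀ H : Subgroup G, H.FG → ∀ x ∉ H, ∃ K : Subgroup G, H ≤ K ∧ K.FiniteIndex ∧ x ∉ K := by
  refine forall_congr' fun H => imp_congr_right fun _ => ?_
  rw [le_antisymm_iff, and_iff_right (le_sInf fun K hK => hK.1), SetLike.le_def]
  simp only [Subgroup.mem_sInf, Set.mem_ofPred_eq, and_imp]
  constructor
  · intro h x hx
    by_contra! hK
    exact hx (h fun K hHK hK' => hK K hHK hK')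
  · intro h x hx
    by_contra hxH
    obtain ⟨K, hHK, hK, hxK⟩ := h x hxH
    exact hxK (hx K hHK hK)

namespace IsLERF

open Subgroup

variable {G A : Type*} [Group G] [Group A]

theorem exists_normal_notMem_sup_prod_bot (hG : IsLERF G) {L : Subgroup (G × A)} (hL : L.FG)
    {Z : Subgroup A} [Z.FiniteIndex] (hZ : (⊥ : Subgroup G).prod Z ≤ L) {x : G × A} (hx : x ∉ L) :
    ∃ N : Subgroup G, N.Normal ∧ N.FiniteIndex ∧ x ∉ L ⊔ N.prod ⊥ := by
  by_cases hx₂ : ∃ y ∈ L, y.2 = x.2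
  swap
  · refine ⟨⊤, inferInstance, inferInstance, fun hxN => hx₂ ?_⟩
    obtain ⟨y, hy, z, hz, rfl⟩ := mem_sup_of_normal_right.mp hxN
    exact ⟨y, hy, by simp [mem_bot.mp (mem_prod.mp hz).2]⟩
  obtain ⟨y₀, hy₀, hy₀x⟩ := hx₂
  set B := (L ⊓ (⊤ : Subgroup G).prod Z).map (MonoidHom.fst G A)
  have hxB : (y₀⁻¹ * x).1 ∉ B := by
    rintro ⟨l, ⟨hlL, -, hlZ⟩, hlg⟩
    have hx' : y₀ * l * (1, l.2)⁻¹ = x := by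
      ext
      · simp only [MonoidHom.coe_fst, Prod.fst_mul, Prod.fst_inv] at hlg
        simp [hlg]
      · simp [hy₀x]
    exact hx (hx' ▸ L.mul_mem (L.mul_mem hy₀ hlL) (L.inv_mem (hZ ⟨one_mem _, hlZ⟩)))
  obtain ⟨K, hBK, hK, hgK⟩ := isLERF_iff.mp hG B ((hL.inf_of_finiteIndex _).map _) _ hxB
  refine ⟨K.normalCore, inferInstance, inferInstance, fun hxN => hgK ?_⟩
  obtain ⟨y, hy, z, hz, rfl⟩ := mem_sup_of_normal_right.mp hxN
  obtain ⟨hz₁, hz₂⟩ := mem_prod.mp hz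
  have hyB : (y₀⁻¹ * y).1 ∈ B := by
    refine ⟨y₀⁻¹ * y, ⟨L.mul_mem (L.inv_mem hy₀) hy, mem_top _, ?_⟩, rfl⟩
    simp [hy₀x, mem_bot.mp hz₂]
  simpa [mul_assoc] using K.mul_mem (hBK hyB) (K.normalCore_le hz₁)

theorem exists_finiteIndex_notMem_of_bot_prod_le (hG : IsLERF G) {L : Subgroup (G × A)}
    (hL : L.FG) {Z : Subgroup A} [Z.FiniteIndex] (hZ : (⊥ : Subgroup G).prod Z ≤ L) {x : G × A}
    (hx : x ∉ L) : ∃ K : Subgroup (G × A), L ≤ K ∧ K.FiniteIndex ∧ x ∉ K := by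
  obtain ⟨N, _, _, hxN⟩ := hG.exists_normal_notMem_sup_prod_bot hL hZ hx
  refine ⟨L ⊔ N.prod ⊥, le_sup_left, finiteIndex_of_le (H := N.prod Z) ?_, hxN⟩
  rintro ⟨g, a⟩ ⟨hg, ha⟩
  have ha' : ((1, a) : G × A) ∈ (⊥ : Subgroup G).prod Z := ⟨one_mem _, ha⟩
  have hg' : ((g, 1) : G × A) ∈ N.prod ⊥ := ⟨hg, one_mem _⟩
  simpa using mul_mem_sup (hZ ha') hg'

end IsLERF

open Subgroup in
theorem lerf_prod_int {G : Type*} [Group G] (hG : IsLERF G) :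
    IsLERF (G × Multiplicative ℤ) := by
  refine isLERF_iff.mpr fun H hH x hx => ?_
  set c : G × Multiplicative ℤ := (1, .ofAdd 1)
  have hc : c ∈ center (G × Multiplicative ℤ) :=
    mem_center_iff.mpr fun y => Prod.ext (by simp [c]) (mul_comm _ _)
  obtain ⟨n, hn, hxn⟩ := exists_ne_zero_notMem_sup_zpowers_zpow hc hx
  have hZ : ((AddSubgroup.zmultiples n).toSubgroup).FiniteIndex :=
    ⟨by simpa [AddSubgroup.index_toSubgroup, Int.index_zmultiples] using hn⟩
  have hcZ : (⊥ : Subgroup G).prod (AddSubgroup.zmultiples n).toSubgroup ≤ H ⊔ zpowers (c ^ n) := by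
    rintro ⟨g, a⟩ ⟨hg, k, hk⟩
    refine mem_sup_right ⟨k, Prod.ext ?_ ?_⟩
    · simpa [c] using (mem_bot.mp hg).symm
    · simp only at hk
      apply Multiplicative.toAdd.injective
      simp [c, ← hk, toAdd_zpow, mul_comm]
  have hFG : (H ⊔ zpowers (c ^ n)).FG := hH.sup ⟨{c ^ n}, by simp [zpowers_eq_closure]⟩
  obtain ⟨K, hK, hKfi, hxK⟩ := hG.exists_finiteIndex_notMem_of_bot_prod_le hFG hcZ hxn
  exact ⟨K, le_sup_left.trans hK, hKfi, hxK⟩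
end

section
/- If a group G has property (LR) and is residually finite, then G is subgroup separable. -/
/-- `H` is a virtual retract of `G` if there is a finite-index subgroup `K` of `G`
containing `H` together with a homomorphism `K → H` restricting to the identity on `H`. -/
def IsVirtualRetract {G : Type*} [Group G] (H : Subgroup G) : Prop :=
  ∃ K : Subgroup G, K.FiniteIndex ∧ H ≤ K ∧
    ∃ ρ : K →* G, (∀ k : K, ρ k ∈ H) ∧ ∀ k : K, (k : G) ∈ H → ρ k = k

/-- A group has property (LR) if every finitely generated subgroup is a virtual retract. -/
def HasLR (G : Type*) [Group G] : Prop :=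
  ∀ H : Subgroup G, H.FG → IsVirtualRetract H

theorem lerf_of_lr_residuallyFinite {G : Type*} [Group G] (hLR : HasLR G)
    (hRF : (⊥ : Subgroup G) = sInf {K : Subgroup G | K.FiniteIndex}) :
    IsLERF G := by
  intro H hFG
  obtain ⟨K, hKfi, hHK, ρ, hρH, hρid⟩ := hLR H hFG
  apply le_antisymm
  · exact le_sInf fun L hL => hL.1
  · intro g hg
    have hgK : g ∈ K := Subgroup.mem_sInf.mp hg K ⟨hHK, hKfi⟩
    set k : K := ⟨g, hgK⟩ with hk
    -- It suffices to show ρ k = g, since ρ k ∈ H.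
    suffices h : ρ k = g by rw [← h]; exact hρH k
    -- Show g⁻¹ * ρ k lies in every finite-index subgroup of G.
    have key : g⁻¹ * ρ k ∈ (⊥ : Subgroup G) := by
      rw [hRF]
      refine Subgroup.mem_sInf.mpr fun N hN => ?_
      haveI : N.FiniteIndex := hN
      set N' := N.normalCore with hN'
      haveI : N'.FiniteIndex := Subgroup.finiteIndex_normalCore N
      haveI : N'.Normal := Subgroup.normalCore_normal N
      -- two homomorphisms K → G ⧸ N'
      set f : K →* G ⧸ N' := (QuotientGroup.mk' N').comp ρ with hf
      set f' : K →* G ⧸ N' := (QuotientGroup.mk' N').comp K.subtype with hf'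
      set E : Subgroup K := f.eqLocus f' with hE
      have hEfi : E.FiniteIndex := by
        haveI : Finite (f.range) := Subgroup.instFiniteSubtypeMem _
        haveI : Finite (f'.range) := Subgroup.instFiniteSubtypeMem _
        have hker : f.ker ⊓ f'.ker ≤ E := by
          intro x hx
          obtain ⟨hx1, hx2⟩ := Subgroup.mem_inf.mp hx
          show f x = f' x
          rw [MonoidHom.mem_ker.mp hx1, MonoidHom.mem_ker.mp hx2]
        exact Subgroup.finiteIndex_of_le hker
      set M : Subgroup G := E.map K.subtype with hM
      have hMfi : M.FiniteIndex := by
        constructor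
        rw [hM, Subgroup.index_map_subtype]
        exact Nat.mul_ne_zero hEfi.index_ne_zero hKfi.index_ne_zero
      have hHM : H ≤ M := by
        intro h hh
        exact ⟨⟨h, hHK hh⟩, by
          show f _ = f' _
          simp [hf, hf', hρid ⟨h, hHK hh⟩ hh], rfl⟩
      have hgM : g ∈ M := Subgroup.mem_sInf.mp hg M ⟨hHM, hMfi⟩
      obtain ⟨x, hx, hxg⟩ := hgM
      have hxk : x = k := by ext; exact hxg
      rw [hxk] at hx
      have : f k = f' k := hx
      simp only [hf, hf', MonoidHom.comp_apply, QuotientGroup.mk'_apply] at this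
      have : g⁻¹ * ρ k ∈ N' := by
        rwa [eq_comm, QuotientGroup.eq] at this
      exact N.normalCore_le this
    rw [Subgroup.mem_bot] at key
    exact (inv_mul_eq_one.mp key).symm
end

section
/- Let L = F₂(a,b) ⋊ ℤ where the generator c of ℤ acts by c·a·c⁻¹ = a and c·b·c⁻¹ = a⁻²b. Then the kernel N of the homomorphism L → ℤ/2 sending a ↦ 1, b ↦ 0, c ↦ 0 is an index-2 subgroup of L admitting the presentation ⟨c, b, x, t | cxc⁻¹ = x, ctc⁻¹ = x⁻¹t, cbc⁻¹ = x⁻¹b⟩. -/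
/-!
Conjugation by `a` preserves `N` and acts on the generators `c, b, x = a², t = aba⁻¹` by
`c ↦ c, b ↦ t, x ↦ x, t ↦ xbx⁻¹`; on the presented group `P` these formulas define an
endomorphism whose square is conjugation by `x`. That is exactly what is needed to adjoin to `P`
a square root `α` of `x` acting by it, giving a group `E = P ⊔ Pα` in which `P` is the kernel of
the parity `E → ℤ/2`. Sending `a ↦ α, b ↦ b, c ↦ c` and, back, `α ↦ a, c ↦ c, b ↦ b, x ↦ a²,
t ↦ aba⁻¹` gives mutually inverse isomorphisms `L ≃ E` that turn `f` into the parity, so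
`ker f ≅ P`.
-/

namespace Stmt15

-- generators of the presentation of N: 0 ↦ c, 1 ↦ b, 2 ↦ x, 3 ↦ t
private abbrev c : FreeGroup (Fin 4) := FreeGroup.of 0
private abbrev b : FreeGroup (Fin 4) := FreeGroup.of 1
private abbrev x : FreeGroup (Fin 4) := FreeGroup.of 2
private abbrev t : FreeGroup (Fin 4) := FreeGroup.of 3

/-- Relations of `⟨c, b, x, t | cxc⁻¹ = x, ctc⁻¹ = x⁻¹t, cbc⁻¹ = x⁻¹b⟩`. -/
def relsN : Set (FreeGroup (Fin 4)) :=
  {c * x * c⁻¹ * x⁻¹, c * t * c⁻¹ * (x⁻¹ * t)⁻¹, c * b * c⁻¹ * (x⁻¹ * b)⁻¹}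

lemma map_zpow_apply_eq_conj {G H : Type*} [Group G] [Group H] (f : G →* H) (θ : MulAut G)
    (h : H) (hf : ∀ w, f (θ w) = h * f w * h⁻¹) (n : ℤ) (w : G) :
    f ((θ ^ n) w) = h ^ n * f w * (h ^ n)⁻¹ := by
  induction n using Int.induction_on generalizing w with
  | zero => simp
  | succ n ih => rw [zpow_add_one, MulAut.mul_apply, ih, hf, zpow_add_one]; group
  | pred n ih =>
    have hf' : f (θ⁻¹ w) = h⁻¹ * f w * h := by
      have := hf (θ⁻¹ w)
      rw [MulAut.apply_inv_self] at this
      rw [this]; group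
    rw [zpow_sub_one, MulAut.mul_apply, ih, hf', zpow_sub_one]; group

lemma index_ker_eq_two {G : Type*} [Group G] (f : G →* Multiplicative (ZMod 2)) {g : G}
    (hg : f g = .ofAdd 1) : f.ker.index = 2 := by
  have hsurj : Function.Surjective f := fun z => by
    obtain rfl | rfl : z = 1 ∨ z = .ofAdd 1 := by revert z; decide
    exacts [⟨1, map_one f⟩, ⟨g, hg⟩]
  rw [Subgroup.index_ker, MonoidHom.range_eq_top.2 hsurj, Subgroup.card_top,
    Nat.card_eq_fintype_card]
  rfl

/-- What is needed to adjoin to `P` a square root `α` of `sq` with `α * p * α⁻¹ = act p`. -/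
structure IndexTwoData (P : Type*) [Group P] where
  act : P →* P
  sq : P
  act_sq : act sq = sq
  act_act (p : P) : act (act p) = sq * p * sq⁻¹

namespace IndexTwoData

variable {P G : Type*} [Group P] [Group G] (D : IndexTwoData P)

/-- `⟨p, ε⟩` stands for `p * α ^ ε`. -/
structure Ext (D : IndexTwoData P) where
  val : P
  odd : Bool

namespace Ext

variable {D}

instance : Mul D.Ext :=
  ⟨fun g h => ⟨g.val * cond g.odd (D.act h.val) h.val * cond (g.odd && h.odd) D.sq 1,
    xor g.odd h.odd⟩⟩

instance : One D.Ext := ⟨⟨1, false⟩⟩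

instance : Inv D.Ext := ⟨fun g => ⟨cond g.odd (D.sq⁻¹ * (D.act g.val)⁻¹) g.val⁻¹, g.odd⟩⟩

lemma mk_mul_mk (p q : P) (ε δ : Bool) :
    (⟨p, ε⟩ * ⟨q, δ⟩ : D.Ext) = ⟨p * cond ε (D.act q) q * cond (ε && δ) D.sq 1, xor ε δ⟩ := rfl

lemma inv_mk (p : P) (ε : Bool) :
    (⟨p, ε⟩ : D.Ext)⁻¹ = ⟨cond ε (D.sq⁻¹ * (D.act p)⁻¹) p⁻¹, ε⟩ := rfl

lemma one_def : (1 : D.Ext) = ⟨1, false⟩ := rfl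

instance : Group D.Ext where
  mul_assoc := by
    rintro ⟨p, _ | _⟩ ⟨q, _ | _⟩ ⟨r, _ | _⟩ <;>
      simp only [mk_mul_mk, Bool.false_and, Bool.true_and, Bool.xor_false, Bool.xor_true,
        Bool.not_true, Bool.not_false, cond_true, cond_false, map_mul, D.act_act, D.act_sq,
        mul_one, Ext.mk.injEq] <;>
      refine ⟨by group, trivial⟩
  one_mul := by rintro ⟨p, _ | _⟩ <;> simp [one_def, mk_mul_mk]
  mul_one := by rintro ⟨p, _ | _⟩ <;> simp [one_def, mk_mul_mk]
  inv_mul_cancel := by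
    rintro ⟨p, _ | _⟩ <;>
      simp only [inv_mk, mk_mul_mk, one_def, cond_true, cond_false, Bool.and_self,
        Bool.xor_self, Ext.mk.injEq] <;>
      refine ⟨by group, trivial⟩

end Ext

def incl : P →* D.Ext where
  toFun p := ⟨p, false⟩
  map_one' := rfl
  map_mul' _ _ := by simp [Ext.mk_mul_mk]

lemma incl_injective : Function.Injective D.incl := fun _ _ h => congrArg Ext.val h

def root : D.Ext := ⟨1, true⟩

lemma mk_eq_incl_mul (p : P) (ε : Bool) : (⟨p, ε⟩ : D.Ext) = D.incl p * cond ε D.root 1 := by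
  cases ε <;> simp [incl, root, Ext.mk_mul_mk, Ext.one_def]

lemma root_mul_incl_mul_inv (p : P) : D.root * D.incl p * D.root⁻¹ = D.incl (D.act p) := by
  simp [incl, root, Ext.mk_mul_mk, Ext.inv_mk, D.act_sq]

lemma root_sq : D.root ^ 2 = D.incl D.sq := by
  simp [pow_two, incl, root, Ext.mk_mul_mk]

theorem hom_ext {φ₁ φ₂ : D.Ext →* G} (h : φ₁.comp D.incl = φ₂.comp D.incl)
    (hroot : φ₁ D.root = φ₂ D.root) : φ₁ = φ₂ := by
  ext ⟨p, ε⟩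
  have hp : φ₁ (D.incl p) = φ₂ (D.incl p) := DFunLike.congr_fun h p
  cases ε <;> simp [mk_eq_incl_mul, hp, hroot]

def lift (ψ : P →* G) (g : G) (hact : ∀ p, ψ (D.act p) * g = g * ψ p) (hsq : ψ D.sq = g ^ 2) :
    D.Ext →* G where
  toFun h := ψ h.val * cond h.odd g 1
  map_one' := by simp [Ext.one_def]
  map_mul' := by
    rintro ⟨p, _ | _⟩ ⟨q, _ | _⟩ <;> simp only [Ext.mk_mul_mk, Bool.false_and, Bool.true_and,
      Bool.xor_false, Bool.xor_true, Bool.not_true, Bool.not_false, cond_true, cond_false,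
      map_mul, mul_one, mul_assoc]
    · rw [hact]
    · rw [hsq, pow_two, ← mul_assoc (ψ (D.act q)), hact]; group

@[simp] lemma lift_incl {ψ : P →* G} {g : G} (hact) (hsq) (p : P) :
    D.lift ψ g hact hsq (D.incl p) = ψ p := mul_one _

@[simp] lemma lift_root {ψ : P →* G} {g : G} (hact) (hsq) : D.lift ψ g hact hsq D.root = g := by
  simp [lift, root]

def parity : D.Ext →* Multiplicative (ZMod 2) where
  toFun h := .ofAdd (cond h.odd 1 0)
  map_one' := rfl
  map_mul' := by rintro ⟨p, _ | _⟩ ⟨q, _ | _⟩ <;> simp only [Ext.mk_mul_mk] <;> decide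

@[simp] lemma parity_incl (p : P) : D.parity (D.incl p) = 1 := rfl

@[simp] lemma parity_root : D.parity D.root = .ofAdd 1 := rfl

lemma ker_parity : D.parity.ker = D.incl.range := by
  ext ⟨p, _ | _⟩
  · exact iff_of_true rfl ⟨p, rfl⟩
  · refine iff_of_false (by simp [parity]) ?_
    rintro ⟨q, hq⟩
    exact Bool.false_ne_true (congrArg Ext.odd hq)

theorem nonempty_mulEquiv_ker_parity_comp (e : G ≃* D.Ext) :
    Nonempty (P ≃* (D.parity.comp (e : G →* D.Ext)).ker) := by
  have hker :
      (D.parity.comp (e : G →* D.Ext)).ker = ((e.symm : D.Ext →* G).comp D.incl).range := by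
    rw [MonoidHom.ker_comp_mulEquiv, ker_parity, MonoidHom.range_comp]
  have hinj : Function.Injective ((e.symm : D.Ext →* G).comp D.incl) :=
    e.symm.injective.comp D.incl_injective
  exact ⟨(MonoidHom.ofInjective hinj).trans (MulEquiv.subgroupCongr hker.symm)⟩

end IndexTwoData

abbrev Pres := PresentedGroup relsN

namespace Pres

variable {G : Type*} [Group G]

def c : Pres := .of 0
def b : Pres := .of 1
def x : Pres := .of 2
def t : Pres := .of 3

theorem hom_ext {φ₁ φ₂ : Pres →* G} (hc : φ₁ c = φ₂ c) (hb : φ₁ b = φ₂ b) (hx : φ₁ x = φ₂ x)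
    (ht : φ₁ t = φ₂ t) : φ₁ = φ₂ :=
  PresentedGroup.ext fun i => by fin_cases i <;> assumption

section lift

variable (c' b' x' t' : G) (h₁ : c' * x' * c'⁻¹ = x') (h₂ : c' * t' * c'⁻¹ = x'⁻¹ * t')
  (h₃ : c' * b' * c'⁻¹ = x'⁻¹ * b')

def lift : Pres →* G :=
  PresentedGroup.toGroup (f := ![c', b', x', t']) <| by
    rintro r (rfl | rfl | rfl) <;> simp [h₁, h₂, h₃]

include h₁ h₂ h₃

@[simp] lemma lift_c : lift c' b' x' t' h₁ h₂ h₃ c = c' := PresentedGroup.toGroup.of _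
@[simp] lemma lift_b : lift c' b' x' t' h₁ h₂ h₃ b = b' := PresentedGroup.toGroup.of _
@[simp] lemma lift_x : lift c' b' x' t' h₁ h₂ h₃ x = x' := PresentedGroup.toGroup.of _
@[simp] lemma lift_t : lift c' b' x' t' h₁ h₂ h₃ t = t' := PresentedGroup.toGroup.of _

end lift

lemma c_x_c_inv : c * x * c⁻¹ = x := mul_inv_eq_one.1 (PresentedGroup.one_of_mem (Or.inl rfl))

lemma c_t_c_inv : c * t * c⁻¹ = x⁻¹ * t :=
  mul_inv_eq_one.1 (PresentedGroup.one_of_mem (Or.inr (Or.inl rfl)))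

lemma c_b_c_inv : c * b * c⁻¹ = x⁻¹ * b :=
  mul_inv_eq_one.1 (PresentedGroup.one_of_mem (Or.inr (Or.inr rfl)))

def conjA : Pres →* Pres :=
  lift c t x (x * b * x⁻¹) c_x_c_inv
    (calc c * (x * b * x⁻¹) * c⁻¹ = (c * x * c⁻¹) * (c * b * c⁻¹) * (c * x * c⁻¹)⁻¹ := by group
      _ = x⁻¹ * (x * b * x⁻¹) := by rw [c_x_c_inv, c_b_c_inv]; group)
    c_t_c_inv

@[simp] lemma conjA_c : conjA c = c := lift_c ..
@[simp] lemma conjA_b : conjA b = t := lift_b ..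
@[simp] lemma conjA_x : conjA x = x := lift_x ..
@[simp] lemma conjA_t : conjA t = x * b * x⁻¹ := lift_t ..

lemma conjA_conjA (p : Pres) : conjA (conjA p) = x * p * x⁻¹ := by
  have hcx : c * x = x * c := mul_inv_eq_iff_eq_mul.1 c_x_c_inv
  suffices conjA.comp conjA = (MulAut.conj x).toMonoidHom from DFunLike.congr_fun this p
  refine hom_ext ?_ ?_ ?_ ?_ <;> simp [← hcx]

def sqrtX : IndexTwoData Pres := ⟨conjA, x, conjA_x, conjA_conjA⟩

@[simp] lemma sqrtX_act : sqrtX.act = conjA := rfl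
@[simp] lemma sqrtX_sq : sqrtX.sq = x := rfl

end Pres

abbrev F₂ := FreeGroup (Fin 2)

def θ₀ : MulAut F₂ :=
  MonoidHom.toMulEquiv (FreeGroup.lift ![.of 0, (.of 0)⁻¹ ^ 2 * .of 1])
    (FreeGroup.lift ![.of 0, .of 0 ^ 2 * .of 1])
    (FreeGroup.ext_hom _ _ fun i => by fin_cases i <;> simp)
    (FreeGroup.ext_hom _ _ fun i => by fin_cases i <;> simp)

@[simp] lemma θ₀_of_zero : θ₀ (.of 0) = .of 0 := by simp [θ₀]

@[simp] lemma θ₀_of_one : θ₀ (.of 1) = (.of 0)⁻¹ ^ 2 * .of 1 := by simp [θ₀]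

lemma eq_θ₀ {θ : MulAut F₂} (ha : θ (.of 0) = .of 0) (hb : θ (.of 1) = (.of 0)⁻¹ ^ 2 * .of 1) :
    θ = θ₀ :=
  MulEquiv.toMonoidHom_injective <|
    FreeGroup.ext_hom _ _ fun i => by fin_cases i <;> simp [ha, hb]

abbrev L := F₂ ⋊[zpowersHom (MulAut F₂) θ₀] Multiplicative ℤ

namespace L

variable {G : Type*} [Group G]

def a : L := .inl (.of 0)
def b : L := .inl (.of 1)
def c : L := .inr (.ofAdd 1)

lemma c_inl_c_inv (w : F₂) : c * .inl w * c⁻¹ = .inl (θ₀ w) := by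
  rw [c, ← map_inv, ← SemidirectProduct.inl_aut]
  simp

lemma c_a_c_inv : c * a * c⁻¹ = a := by
  rw [a, c_inl_c_inv, θ₀_of_zero]

lemma c_b_c_inv : c * b * c⁻¹ = a⁻¹ ^ 2 * b := by
  rw [b, c_inl_c_inv, a, θ₀_of_one, map_mul, map_pow, map_inv]

theorem hom_ext {φ₁ φ₂ : L →* G} (ha : φ₁ a = φ₂ a) (hb : φ₁ b = φ₂ b) (hc : φ₁ c = φ₂ c) :
    φ₁ = φ₂ :=
  SemidirectProduct.hom_ext (FreeGroup.ext_hom _ _ fun i => by fin_cases i <;> assumption)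
    (MonoidHom.ext_mint hc)

section lift

variable (a' b' c' : G) (ha : c' * a' * c'⁻¹ = a') (hb : c' * b' * c'⁻¹ = a'⁻¹ ^ 2 * b')

def lift : L →* G :=
  SemidirectProduct.lift (FreeGroup.lift ![a', b']) (zpowersHom G c') fun n => by
    have hθ₀ : ∀ w, FreeGroup.lift ![a', b'] (θ₀ w) = c' * FreeGroup.lift ![a', b'] w * c'⁻¹ := by
      refine DFunLike.congr_fun (FreeGroup.ext_hom ((FreeGroup.lift ![a', b']).comp θ₀.toMonoidHom)
        ((MulAut.conj c').toMonoidHom.comp (FreeGroup.lift ![a', b'])) fun i => ?_)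
      fin_cases i <;> simp [ha, hb]
    refine MonoidHom.ext fun w => ?_
    exact map_zpow_apply_eq_conj _ θ₀ c' hθ₀ n.toAdd w

include ha hb

@[simp] lemma lift_a : lift a' b' c' ha hb a = a' := by simp [lift, a]
@[simp] lemma lift_b : lift a' b' c' ha hb b = b' := by simp [lift, b]
@[simp] lemma lift_c : lift a' b' c' ha hb c = c' := by simp [lift, c]

end lift

end L

namespace Pres

def toL : Pres →* L :=
  lift L.c L.b (L.a ^ 2) (L.a * L.b * L.a⁻¹) (by rw [← conj_pow, L.c_a_c_inv])
    (calc L.c * (L.a * L.b * L.a⁻¹) * L.c⁻¹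
          = (L.c * L.a * L.c⁻¹) * (L.c * L.b * L.c⁻¹) * (L.c * L.a * L.c⁻¹)⁻¹ := by group
      _ = (L.a ^ 2)⁻¹ * (L.a * L.b * L.a⁻¹) := by rw [L.c_a_c_inv, L.c_b_c_inv]; group)
    (by rw [L.c_b_c_inv, inv_pow])

@[simp] lemma toL_c : toL c = L.c := lift_c ..
@[simp] lemma toL_b : toL b = L.b := lift_b ..
@[simp] lemma toL_x : toL x = L.a ^ 2 := lift_x ..
@[simp] lemma toL_t : toL t = L.a * L.b * L.a⁻¹ := lift_t ..

lemma toL_conjA (p : Pres) : toL (conjA p) = L.a * toL p * L.a⁻¹ := by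
  have hac : L.c * L.a = L.a * L.c := mul_inv_eq_iff_eq_mul.1 L.c_a_c_inv
  suffices toL.comp conjA = (MulAut.conj L.a).toMonoidHom.comp toL from DFunLike.congr_fun this p
  refine hom_ext ?_ ?_ ?_ ?_ <;> simp [← hac, pow_two, mul_assoc]

end Pres

namespace L

def toExt : L →* Pres.sqrtX.Ext :=
  lift Pres.sqrtX.root (Pres.sqrtX.incl Pres.b) (Pres.sqrtX.incl Pres.c)
    (by
      have h := Pres.sqrtX.root_mul_incl_mul_inv Pres.c
      rw [Pres.sqrtX_act, Pres.conjA_c, mul_inv_eq_iff_eq_mul] at h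
      rw [← h]; group)
    (calc Pres.sqrtX.incl Pres.c * Pres.sqrtX.incl Pres.b * (Pres.sqrtX.incl Pres.c)⁻¹
          = Pres.sqrtX.incl (Pres.c * Pres.b * Pres.c⁻¹) := by simp
      _ = (Pres.sqrtX.root ^ 2)⁻¹ * Pres.sqrtX.incl Pres.b := by
        rw [Pres.c_b_c_inv, Pres.sqrtX.root_sq]; simp
      _ = Pres.sqrtX.root⁻¹ ^ 2 * Pres.sqrtX.incl Pres.b := by rw [inv_pow])

@[simp] lemma toExt_a : toExt a = Pres.sqrtX.root := lift_a ..
@[simp] lemma toExt_b : toExt b = Pres.sqrtX.incl Pres.b := lift_b ..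
@[simp] lemma toExt_c : toExt c = Pres.sqrtX.incl Pres.c := lift_c ..

def ofExt : Pres.sqrtX.Ext →* L :=
  Pres.sqrtX.lift Pres.toL a (fun p => by simp [Pres.toL_conjA]) (by simp)

@[simp] lemma ofExt_incl (p : Pres) : ofExt (Pres.sqrtX.incl p) = Pres.toL p := by
  simp [ofExt]

@[simp] lemma ofExt_root : ofExt Pres.sqrtX.root = a := by
  simp [ofExt]

def equivExt : L ≃* Pres.sqrtX.Ext :=
  toExt.toMulEquiv ofExt (hom_ext (by simp) (by simp) (by simp))
    (Pres.sqrtX.hom_ext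
      (Pres.hom_ext (by simp) (by simp) (by simp [Pres.sqrtX.root_sq])
        (by simp [Pres.sqrtX.root_mul_incl_mul_inv]))
      (by simp))

end L

theorem kernel_index_two_and_presentation
    (θ : MulAut (FreeGroup (Fin 2)))
    (hθa : θ (FreeGroup.of 0) = FreeGroup.of 0)
    (hθb : θ (FreeGroup.of 1) = (FreeGroup.of 0)⁻¹ ^ 2 * FreeGroup.of 1)
    (f : FreeGroup (Fin 2) ⋊[zpowersHom (MulAut (FreeGroup (Fin 2))) θ]
          Multiplicative ℤ →* Multiplicative (ZMod 2))
    (hfa : f (SemidirectProduct.inl (FreeGroup.of 0)) = Multiplicative.ofAdd 1)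
    (hfb : f (SemidirectProduct.inl (FreeGroup.of 1)) = 1)
    (hfc : f (SemidirectProduct.inr (Multiplicative.ofAdd (1 : ℤ))) = 1) :
    f.ker.index = 2 ∧ Nonempty (PresentedGroup relsN ≃* f.ker) := by
  obtain rfl : θ = θ₀ := eq_θ₀ hθa hθb
  have hf : f = Pres.sqrtX.parity.comp L.toExt :=
    L.hom_ext (hfa.trans (by simp)) (hfb.trans (by simp)) (hfc.trans (by simp))
  refine ⟨index_ker_eq_two f hfa, ?_⟩
  subst hf
  exact Pres.sqrtX.nonempty_mulEquiv_ker_parity_comp L.equivExt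

end Stmt15
end

section
/- Let 1 → A → G → Q → 1 be a short exact sequence of groups with Q finite. If A is subgroup separable, then G is subgroup separable. -/
private lemma subgroup_fg_map {G G' : Type*} [Group G] [Group G'] (f : G →* G')
    (P : Subgroup G) (h : P.FG) : (P.map f).FG := by
  rw [Subgroup.fg_iff_submonoid_fg] at h ⊢
  exact h.map f

private lemma subgroup_fg_of_map_injective {G G' : Type*} [Group G] [Group G'] (f : G →* G')
    (hf : Function.Injective f) (P : Subgroup G) (h : (P.map f).FG) : P.FG := by
  rw [Subgroup.fg_iff_submonoid_fg] at h ⊢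
  exact Submonoid.FG.map_injective f hf h

theorem lerf_of_ses_finite_quotient {A G Q : Type*} [Group A] [Group G] [Group Q]
    [Finite Q] (i : A →* G) (p : G →* Q) (hi : Function.Injective i)
    (hp : Function.Surjective p) (hexact : i.range = p.ker)
    (hA : IsLERF A) : IsLERF G := by
  intro H hfg
  refine le_antisymm (le_sInf fun K hK => hK.1) ?_
  intro g hg
  rw [Subgroup.mem_sInf] at hg
  by_contra hgH
  -- It suffices to find a finite-index subgroup containing H but not g
  suffices hsuff : ∃ K : Subgroup G, H ≤ K ∧ K.FiniteIndex ∧ g ∉ K by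
    obtain ⟨K, hHK, hKfi, hgK⟩ := hsuff
    exact hgK (hg K ⟨hHK, hKfi⟩)
  set N : Subgroup G := p.ker with hN
  haveI : N.FiniteIndex := Subgroup.finiteIndex_ker p
  by_cases hgHN : g ∈ H ⊔ N
  case neg =>
    exact ⟨H ⊔ N, le_sup_left, Subgroup.finiteIndex_of_le le_sup_right, hgHN⟩
  -- g = h * n with h ∈ H, n ∈ N, and n ∉ H
  rw [← SetLike.mem_coe, Subgroup.mul_normal H N] at hgHN
  obtain ⟨h, hh, n, hn, rfl⟩ := hgHN
  have hnH : n ∉ H := fun hmem => hgH (mul_mem hh hmem)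
  -- pull back H ⊓ N to A
  obtain ⟨a, ha⟩ : n ∈ i.range := by rw [hexact]; exact hn
  set M : Subgroup A := (N ⊓ H).comap i with hM
  have hMmap : M.map i = N ⊓ H := by
    refine Subgroup.map_comap_eq_self ?_
    rw [hexact]; exact inf_le_left
  -- M is finitely generated
  haveI : Group.FG H := (Group.fg_iff_subgroup_fg H).2 hfg
  haveI : (N.subgroupOf H).FiniteIndex := Subgroup.instFiniteIndex_subgroupOf N H
  have hNHfg : (N ⊓ H).FG := by
    have := Subgroup.fg_of_index_ne_zero (N.subgroupOf H)
    have h1 : (N.subgroupOf H).FG := (Group.fg_iff_subgroup_fg _).1 this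
    have := subgroup_fg_map H.subtype _ h1
    rwa [Subgroup.subgroupOf_map_subtype] at this
  have hMfg : M.FG := by
    apply subgroup_fg_of_map_injective i hi
    rwa [hMmap]
  -- a ∉ M, so by LERF of A there is a finite-index K_A ⊇ M missing a
  have haM : a ∉ M := by
    intro hmem
    rw [Subgroup.mem_comap, ha] at hmem
    exact hnH hmem.2
  rw [hA M hMfg, Subgroup.mem_sInf] at haM
  push_neg at haM
  obtain ⟨KA, ⟨hMKA, hKAfi⟩, haKA⟩ := haM
  -- push forward to G
  set L : Subgroup G := KA.map i with hL
  have hLN : L ≤ N := by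
    rw [hL, ← hexact]
    exact Subgroup.map_le_range i KA
  haveI : L.FiniteIndex := by
    constructor
    rw [hL, Subgroup.index_map_of_injective KA hi]
    exact mul_ne_zero hKAfi.index_ne_zero (by rw [hexact]; exact Subgroup.FiniteIndex.index_ne_zero)
  -- take the normal core and join with H
  set L₀ : Subgroup G := L.normalCore with hL₀
  haveI : L₀.Normal := Subgroup.normalCore_normal L
  haveI : L₀.FiniteIndex := Subgroup.finiteIndex_normalCore L
  refine ⟨H ⊔ L₀, le_sup_left, Subgroup.finiteIndex_of_le le_sup_right, ?_⟩
  intro hgK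
  rw [← SetLike.mem_coe, Subgroup.mul_normal H L₀] at hgK
  obtain ⟨h', hh', l, hl, heq⟩ := hgK
  -- then n ∈ L, contradicting a ∉ KA
  have hlL : l ∈ L := Subgroup.normalCore_le L hl
  have heq' : h' * l = h * n := heq
  have hne : n = (h⁻¹ * h') * l := by
    rw [mul_assoc, heq', ← mul_assoc, inv_mul_cancel, one_mul]
  have hhhN : h⁻¹ * h' ∈ N := by
    have : h⁻¹ * h' = n * l⁻¹ := by rw [hne]; group
    rw [this]
    exact mul_mem (show n ∈ N from hn) (inv_mem (hLN hlL))
  have hhhL : h⁻¹ * h' ∈ L := by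
    have h1 : h⁻¹ * h' ∈ N ⊓ H := Subgroup.mem_inf.mpr ⟨hhhN, mul_mem (inv_mem (show h ∈ H from hh)) (show h' ∈ H from hh')⟩
    rw [← hMmap] at h1
    exact Subgroup.map_mono hMKA h1
  have hnL : n ∈ L := by rw [hne]; exact mul_mem hhhL hlL
  rw [hL] at hnL
  obtain ⟨b, hb, hba⟩ := hnL
  rw [← ha] at hba
  rw [hi hba] at hb
  exact haKA hb
end
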